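/- Let A₁, …, A_n be positive semidefinite D×D complex matrices, and let Γ be the n×n real matrix with entries Γ_{i,j} = ‖√(A_i) · √(A_j)‖_∞, where √(A) denotes the positive semidefinite square root and ‖·‖_∞ the operator norm. Then ‖Σ_{k=1}^n A_k‖_∞ ≤ ‖Γ‖_∞. -/

import Mathlib

open scoped ComplexOrder

/-- The operator (spectral) norm of a square matrix over `ℝ` or `ℂ`, i.e. the norm of the
induced continuous linear endomorphism of Euclidean space. -/
noncomputable def opNorm {m : Type*} [Fintype m] [DecidableEq m] {𝕜 : Type*} [RCLike 𝕜]
    (A : Matrix m m 𝕜) : ℝ :=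
  ‖Matrix.toEuclideanCLM (𝕜 := 𝕜) A‖

/-- The square root of a positive semidefinite matrix, as `Matrix.PosSemidef.sqrt` was defined
in Mathlib (removed since). -/
noncomputable def Matrix.PosSemidef.sqrt {n : Type*} [Fintype n] [DecidableEq n] {𝕜 : Type*}
    [RCLike 𝕜] {A : Matrix n n 𝕜} (hA : A.PosSemidef) : Matrix n n 𝕜 :=
  hA.1.eigenvectorUnitary.1 * Matrix.diagonal ((↑) ∘ Real.sqrt ∘ hA.1.eigenvalues) *
    (star hA.1.eigenvectorUnitary : Matrix n n 𝕜)

theorem Matrix.PosSemidef.sqrt_isHermitian' {n : Type*} [Fintype n] [DecidableEq n] {𝕜 : Type*}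
    [RCLike 𝕜] {A : Matrix n n 𝕜} (hA : A.PosSemidef) : hA.sqrt.IsHermitian := by
  unfold Matrix.PosSemidef.sqrt Matrix.IsHermitian
  rw [Matrix.conjTranspose_mul, Matrix.conjTranspose_mul, Matrix.diagonal_conjTranspose,
    ← Matrix.star_eq_conjTranspose, ← Matrix.star_eq_conjTranspose, star_star, ← mul_assoc]
  congr 3
  funext i
  simp

theorem Matrix.PosSemidef.sqrt_mul_self' {n : Type*} [Fintype n] [DecidableEq n] {𝕜 : Type*}
    [RCLike 𝕜] {A : Matrix n n 𝕜} (hA : A.PosSemidef) : hA.sqrt * hA.sqrt = A := by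
  unfold Matrix.PosSemidef.sqrt
  conv_rhs => rw [hA.1.spectral_theorem]
  rw [Unitary.conjStarAlgAut_apply]
  have hU : (star hA.1.eigenvectorUnitary : Matrix n n 𝕜) * hA.1.eigenvectorUnitary.1 = 1 :=
    Unitary.coe_star_mul_self _
  calc _ = (hA.1.eigenvectorUnitary.1 * Matrix.diagonal ((↑) ∘ Real.sqrt ∘ hA.1.eigenvalues)) *
        ((star hA.1.eigenvectorUnitary : Matrix n n 𝕜) * hA.1.eigenvectorUnitary.1) *
        (Matrix.diagonal ((↑) ∘ Real.sqrt ∘ hA.1.eigenvalues) *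
        (star hA.1.eigenvectorUnitary : Matrix n n 𝕜)) := by simp only [mul_assoc]
    _ = _ := by
      rw [hU, mul_one, mul_assoc, ← mul_assoc (Matrix.diagonal _), Matrix.diagonal_mul_diagonal,
        ← mul_assoc]
      congr 3
      funext i
      simp only [Function.comp_apply]
      rw [← RCLike.ofReal_mul, Real.mul_self_sqrt (hA.eigenvalues_nonneg i)]

/-- The operator inequality of Popovici and Sebestyén: for positive semidefinite matrices
`A₁, …, A_n`, one has `‖Σ_k A_k‖_∞ ≤ ‖Γ‖_∞`, where `Γ_{i,j} = ‖√A_i · √A_j‖_∞`. -/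
theorem opNorm_sum_le_opNorm_gram {n D : ℕ} (A : Fin n → Matrix (Fin D) (Fin D) ℂ)
    (hA : ∀ k, (A k).PosSemidef) :
    opNorm (∑ k, A k) ≤
      opNorm (Matrix.of fun i j : Fin n => opNorm ((hA i).sqrt * (hA j).sqrt)) := by
  classical
  set B : Fin n → Matrix (Fin D) (Fin D) ℂ := fun k => (hA k).sqrt with hB
  set Γ : Matrix (Fin n) (Fin n) ℝ :=
    Matrix.of fun i j : Fin n => opNorm (B i * B j) with hΓ
  set T : Matrix (Fin D) (Fin D) ℂ → (EuclideanSpace ℂ (Fin D) →L[ℂ] EuclideanSpace ℂ (Fin D)) :=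
    fun M => Matrix.toEuclideanCLM (𝕜 := ℂ) M with hT
  have hTmul : ∀ M N, T (M * N) = T M ∘L T N := fun M N => map_mul _ M N
  have hadj : ∀ (M : Matrix (Fin D) (Fin D) ℂ), M.IsHermitian →
      ContinuousLinearMap.adjoint (T M) = T M := by
    intro M hM
    rw [hT, ← ContinuousLinearMap.star_eq_adjoint, ← map_star]
    exact congrArg _ hM.eq
  have hBherm : ∀ k, (B k).IsHermitian := fun k => (hA k).sqrt_isHermitian'
  have hBB : ∀ k, B k * B k = A k := fun k => (hA k).sqrt_mul_self'
  have hΓnn : (0:ℝ) ≤ opNorm Γ := norm_nonneg _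
  rw [opNorm]
  refine ContinuousLinearMap.opNorm_le_bound _ hΓnn ?_
  intro x
  set S : Matrix (Fin D) (Fin D) ℂ := ∑ k, A k with hS
  set u : Fin n → ℝ := fun k => ‖T (B k) x‖ with hu
  set uv : EuclideanSpace ℝ (Fin n) := (WithLp.equiv 2 _).symm u with huv
  -- step 1: inner ℂ x (T S x) = ∑ ‖T (B k) x‖^2
  have key1 : (inner ℂ x (T S x) : ℂ) = (∑ k, u k ^ 2 : ℝ) := by
    have : T S x = ∑ k, T (A k) x := by
      simp only [hT, hS, map_sum, ContinuousLinearMap.sum_apply]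
    rw [this, inner_sum]
    have : ∀ k, (inner ℂ x (T (A k) x) : ℂ) = (u k ^ 2 : ℝ) := by
      intro k
      rw [← hBB k, hTmul]
      simp only [ContinuousLinearMap.comp_apply]
      rw [← ContinuousLinearMap.adjoint_inner_left, hadj _ (hBherm k),
        inner_self_eq_norm_sq_to_K]
      push_cast
      norm_num [hu]
    simp_rw [this]
    push_cast
    rfl
  -- step 2: ‖T S x‖^2 ≤ ⟪uv, Γ uv⟫
  have key2 : ‖T S x‖ ^ 2 ≤ (inner ℝ uv ((Matrix.toEuclideanCLM (𝕜 := ℝ) Γ) uv) : ℝ) := by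
    have move : ∀ (M : Matrix (Fin D) (Fin D) ℂ), M.IsHermitian → ∀ v w,
        (inner ℂ v (T M w) : ℂ) = inner ℂ (T M v) w := by
      intro M hM v w
      conv_lhs => rw [← hadj M hM]
      exact ContinuousLinearMap.adjoint_inner_right _ _ _
    have hexp : T S x = ∑ k, T (A k) x := by
      simp only [hT, hS, map_sum, ContinuousLinearMap.sum_apply]
    have hterm : ∀ i j : Fin n, ‖(inner ℂ (T (A i) x) (T (A j) x) : ℂ)‖ ≤ Γ j i * (u i * u j) := by
      intro i j
      have e1 : (inner ℂ (T (A i) x) (T (A j) x) : ℂ)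
          = inner ℂ (T (B j * B i) (T (B i) x)) (T (B j) x) := by
        conv_lhs => rw [← hBB j, hTmul]
        rw [ContinuousLinearMap.comp_apply, move _ (hBherm j)]
        refine congrArg (fun y => inner ℂ y (T (B j) x)) ?_
        rw [← ContinuousLinearMap.comp_apply, ← hTmul, ← ContinuousLinearMap.comp_apply,
          ← hTmul, ← hBB i, ← mul_assoc]
      rw [e1]
      calc ‖(inner ℂ (T (B j * B i) (T (B i) x)) (T (B j) x) : ℂ)‖
          ≤ ‖T (B j * B i) (T (B i) x)‖ * ‖T (B j) x‖ := norm_inner_le_norm _ _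
        _ ≤ (‖T (B j * B i)‖ * ‖T (B i) x‖) * ‖T (B j) x‖ := by
            gcongr
            exact ContinuousLinearMap.le_opNorm _ _
        _ = Γ j i * (u i * u j) := by
            simp only [hΓ, Matrix.of_apply, opNorm, hT, hu]
            ring
    have hrhs : (inner ℝ uv ((Matrix.toEuclideanCLM (𝕜 := ℝ) Γ) uv) : ℝ)
        = ∑ i, ∑ j, Γ j i * (u i * u j) := by
      rw [huv, WithLp.equiv_symm_apply, Matrix.toEuclideanCLM_toLp]
      simp only [PiLp.inner_apply, PiLp.toLp_apply, RCLike.inner_apply,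
        starRingEnd_apply, star_trivial, Matrix.toLin'_apply, Matrix.mulVec,
        dotProduct, Finset.mul_sum, Finset.sum_mul]
      rw [Finset.sum_comm]
      exact Finset.sum_congr rfl fun i _ => Finset.sum_congr rfl fun j _ => by ring
    calc ‖T S x‖ ^ 2 = Complex.re (inner ℂ (T S x) (T S x) : ℂ) := by
          rw [inner_self_eq_norm_sq_to_K]
          norm_cast
      _ = ∑ i, ∑ j, Complex.re (inner ℂ (T (A i) x) (T (A j) x) : ℂ) := by
          rw [hexp, sum_inner]
          simp_rw [inner_sum]
          rw [Complex.re_sum]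
          exact Finset.sum_congr rfl fun i _ => Complex.re_sum _ _
      _ ≤ ∑ i, ∑ j, Γ j i * (u i * u j) := by
          refine Finset.sum_le_sum fun i _ => Finset.sum_le_sum fun j _ => ?_
          exact (Complex.re_le_norm _).trans (hterm i j)
      _ = (inner ℝ uv ((Matrix.toEuclideanCLM (𝕜 := ℝ) Γ) uv) : ℝ) := hrhs.symm
  -- step 3
  have key3 : (inner ℝ uv ((Matrix.toEuclideanCLM (𝕜 := ℝ) Γ) uv) : ℝ) ≤ opNorm Γ * ‖uv‖ ^ 2 := by
    calc (inner ℝ uv ((Matrix.toEuclideanCLM (𝕜 := ℝ) Γ) uv) : ℝ)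
        ≤ ‖uv‖ * ‖(Matrix.toEuclideanCLM (𝕜 := ℝ) Γ) uv‖ := real_inner_le_norm _ _
      _ ≤ ‖uv‖ * (opNorm Γ * ‖uv‖) := by
          gcongr
          exact ContinuousLinearMap.le_opNorm _ _
      _ = opNorm Γ * ‖uv‖ ^ 2 := by ring
  -- step 4
  have key4 : ‖uv‖ ^ 2 ≤ ‖x‖ * ‖T S x‖ := by
    have h1 : ‖uv‖ ^ 2 = ∑ k, u k ^ 2 := by
      rw [← real_inner_self_eq_norm_sq]
      rw [huv, WithLp.equiv_symm_apply]
      simp only [PiLp.inner_apply, PiLp.toLp_apply, RCLike.inner_apply, conj_trivial, sq]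
    rw [h1]
    have h2 : (∑ k, u k ^ 2 : ℝ) = Complex.re (inner ℂ x (T S x)) := by
      rw [key1, Complex.ofReal_re]
    rw [h2]
    calc Complex.re (inner ℂ x (T S x)) ≤ ‖(inner ℂ x (T S x) : ℂ)‖ := Complex.re_le_norm _
      _ ≤ ‖x‖ * ‖T S x‖ := norm_inner_le_norm _ _
  -- combine
  have hfin : ‖T S x‖ ^ 2 ≤ opNorm Γ * (‖x‖ * ‖T S x‖) := by
    calc ‖T S x‖ ^ 2 ≤ opNorm Γ * ‖uv‖ ^ 2 := key2.trans key3
      _ ≤ opNorm Γ * (‖x‖ * ‖T S x‖) := by gcongr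
  rcases eq_or_lt_of_le (norm_nonneg (T S x)) with h0 | h0
  · rw [← h0]; positivity
  · have := mul_le_mul_of_nonneg_right (le_refl (1:ℝ)) (le_of_lt h0)
    nlinarith [hfin, norm_nonneg x, h0]
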